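/- There exists an absolute constant C > 0 such that for all real numbers u, v with 3 ≤ u ≤ v ≤ 2u and v − u ≥ 1, one has E|∑_{u < n ≤ v} f(n)|⁴ ≤ C · v^{2/3} (v − u)^{4/3} (log v)^{52/3}, where the sum runs over integers n in (u, v]. -/

import Mathlib

open MeasureTheory ProbabilityTheory Filter

/-- The uniform (Steinhaus) distribution on the complex unit circle, realized as the
pushforward of normalized Lebesgue measure on `(0, 2π]` under `θ ↦ exp(iθ)`. -/
noncomputable def steinhausMeasure : Measure ℂ :=
  Measure.map (fun θ : ℝ => Complex.exp (Complex.I * θ))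
    ((ENNReal.ofReal (2 * Real.pi))⁻¹ • volume.restrict (Set.Ioc 0 (2 * Real.pi)))

/-- `f : Ω → ℕ → ℂ` is a Steinhaus random multiplicative function w.r.t. `μ`:
each `f · n` is measurable, `f ω` is completely multiplicative (on positive integers),
the values at primes lie on the unit circle, are independent,
and each is uniformly distributed on the unit circle. -/
structure IsSteinhausRMF {Ω : Type*} [MeasurableSpace Ω] (μ : Measure Ω)
    (f : Ω → ℕ → ℂ) : Prop where
  meas : ∀ n : ℕ, Measurable fun ω => f ω n
  map_one : ∀ ω, f ω 1 = 1
  map_mul : ∀ ω, ∀ m n : ℕ, 0 < m → 0 < n → f ω (m * n) = f ω m * f ω n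
  norm_prime : ∀ ω, ∀ p : ℕ, p.Prime → ‖f ω p‖ = 1
  indep : iIndepFun (fun (p : {q : ℕ // q.Prime}) ω => f ω p.1) μ
  unif : ∀ p : ℕ, p.Prime → Measure.map (fun ω => f ω p) μ = steinhausMeasure

/-!
Expanding `|S|⁴ = S² · conj S²` and using the orthogonality `E[f(m) conj f(n)] = [m = n]`
(which follows from the independence of the `f(p)` and their uniformity on the circle) turns
`E|∑_{n ∈ I} f(n)|⁴` into the multiplicative energy of `I = (U, V]`, the number of solutions of
`a₁ b₁ = a₂ b₂` in `I`. The diagonal `a₁ = a₂` gives at most `D²` solutions, `D = V - U`.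
Any other solution factors as `a₁ = g r`, `a₂ = g s`, `b₁ = k s`, `b₂ = k r`, where `g ≤ D`
since `g` divides two distinct elements of `I`, and likewise `k ≤ D`. So it is determined by
the two pairs `(g, a₁)` and `(k, b₁)`, each a divisor `≤ D` of an element of `I`, and there are
at most `∑_{g ≤ D} (D / g + 1) ≤ 2 D (1 + log D)` such pairs. The resulting bound
`O((v - u)² log² v)` is stronger than the claimed one since `v - u ≤ v`.
-/

open ComplexConjugate Finset

theorem integral_steinhausMeasure_pow_mul_conj_pow (a b : ℕ) :
    ∫ z, z ^ a * conj z ^ b ∂steinhausMeasure = if a = b then 1 else 0 := by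
  have h2π : (0 : ℝ) < 2 * Real.pi := by positivity
  have hexp : ∀ θ : ℝ, Complex.exp (Complex.I * θ) ^ a * conj (Complex.exp (Complex.I * θ)) ^ b
      = Complex.exp (((a - b : ℤ) * Complex.I) * θ) := by
    intro θ
    rw [← Complex.exp_conj, map_mul, Complex.conj_I, Complex.conj_ofReal,
      ← Complex.exp_nat_mul, ← Complex.exp_nat_mul, ← Complex.exp_add]
    push_cast
    ring_nf
  rw [steinhausMeasure, integral_map (by fun_prop) (by fun_prop), integral_smul_measure,
    ENNReal.toReal_inv, ENNReal.toReal_ofReal h2π.le, ← intervalIntegral.integral_of_le h2π.le]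
  simp only [hexp]
  split_ifs with hab
  · simp only [hab, sub_self, Int.cast_zero, zero_mul, Complex.exp_zero,
      intervalIntegral.integral_const, sub_zero, smul_smul, inv_mul_cancel₀ h2π.ne', one_smul]
  · have hc : ((a - b : ℤ) * Complex.I) ≠ 0 :=
      mul_ne_zero (Int.cast_ne_zero.mpr (by omega)) Complex.I_ne_zero
    rw [integral_exp_mul_complex hc, Complex.ofReal_mul, Complex.ofReal_ofNat,
      show ((a - b : ℤ) * Complex.I) * (2 * Real.pi) = (a - b : ℤ) * (2 * Real.pi * Complex.I)
        by ring, Complex.exp_int_mul_two_pi_mul_I]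
    simp

namespace IsSteinhausRMF

variable {Ω : Type*} [MeasurableSpace Ω] {μ : Measure Ω} {f : Ω → ℕ → ℂ}

theorem map_finset_prod (hf : IsSteinhausRMF μ f) (ω : Ω) {ι : Type*} (s : Finset ι)
    (g : ι → ℕ) (hg : ∀ i ∈ s, 0 < g i) : f ω (∏ i ∈ s, g i) = ∏ i ∈ s, f ω (g i) := by
  classical
  induction s using Finset.induction with
  | empty => simpa using hf.map_one ω
  | insert i s hi ih =>
    rw [prod_insert hi, prod_insert hi, hf.map_mul ω _ _ (hg i (mem_insert_self i s))
      (prod_pos fun j hj => hg j (mem_insert_of_mem hj)),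
      ih fun j hj => hg j (mem_insert_of_mem hj)]

theorem map_pow (hf : IsSteinhausRMF μ f) (ω : Ω) {n : ℕ} (hn : 0 < n) (k : ℕ) :
    f ω (n ^ k) = f ω n ^ k := by
  simpa using hf.map_finset_prod ω (range k) (fun _ => n) fun _ _ => hn

theorem eq_factorization_prod (hf : IsSteinhausRMF μ f) (ω : Ω) {n : ℕ} (hn : 0 < n) :
    f ω n = n.factorization.prod fun p k => f ω p ^ k := by
  conv_lhs => rw [← Nat.prod_factorization_pow_eq_self hn.ne']
  simp only [Finsupp.prod, Nat.support_factorization]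
  rw [hf.map_finset_prod ω _ _ fun p hp => pow_pos (Nat.prime_of_mem_primeFactors hp).pos _]
  exact prod_congr rfl fun p hp => hf.map_pow ω (Nat.prime_of_mem_primeFactors hp).pos _

theorem norm_eq_one (hf : IsSteinhausRMF μ f) (ω : Ω) {n : ℕ} (hn : 0 < n) : ‖f ω n‖ = 1 := by
  rw [hf.eq_factorization_prod ω hn, Finsupp.prod, Nat.support_factorization, norm_prod]
  exact prod_eq_one fun p hp => by
    rw [norm_pow, hf.norm_prime ω p (Nat.prime_of_mem_primeFactors hp), one_pow]

theorem integral_finset_prod (hf : IsSteinhausRMF μ f) {s : Finset ℕ} (hs : ∀ p ∈ s, p.Prime)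
    (G : ℕ → ℂ → ℂ) (hG : ∀ p, Measurable (G p)) :
    ∫ ω, ∏ p ∈ s, G p (f ω p) ∂μ = ∏ p ∈ s, ∫ ω, G p (f ω p) ∂μ := by
  let e : s → {q : ℕ // q.Prime} := fun p => ⟨p, hs p p.2⟩
  have he : Function.Injective e := fun p q h => Subtype.ext (congrArg Subtype.val h :)
  simp_rw [← prod_coe_sort s]
  exact (hf.indep.precomp he).integral_fun_prod_comp (f := fun p : s => G p)
    (fun p => (hf.meas p).aemeasurable) (fun p => (hG p).aestronglyMeasurable)

theorem integral_pow_mul_conj_pow (hf : IsSteinhausRMF μ f) {p : ℕ} (hp : p.Prime) (a b : ℕ) :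
    ∫ ω, f ω p ^ a * conj (f ω p) ^ b ∂μ = if a = b then 1 else 0 := by
  rw [← integral_steinhausMeasure_pow_mul_conj_pow, ← hf.unif p hp,
    integral_map (hf.meas p).aemeasurable (by fun_prop)]

theorem integral_mul_conj (hf : IsSteinhausRMF μ f) {m n : ℕ} (hm : 0 < m) (hn : 0 < n) :
    ∫ ω, f ω m * conj (f ω n) ∂μ = if m = n then 1 else 0 := by
  set s := (m * n).primeFactors
  have hms : m.factorization.support ⊆ s := by
    rw [Nat.support_factorization]
    exact Nat.primeFactors_mono (dvd_mul_right m n) (by positivity)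
  have hns : n.factorization.support ⊆ s := by
    rw [Nat.support_factorization]
    exact Nat.primeFactors_mono (dvd_mul_left n m) (by positivity)
  have hprod : ∀ ω, f ω m * conj (f ω n)
      = ∏ p ∈ s, f ω p ^ m.factorization p * conj (f ω p) ^ n.factorization p := by
    intro ω
    rw [hf.eq_factorization_prod ω hm, hf.eq_factorization_prod ω hn,
      Finsupp.prod_of_support_subset _ hms _ fun _ _ => pow_zero _,
      Finsupp.prod_of_support_subset _ hns _ fun _ _ => pow_zero _, map_prod, ← prod_mul_distrib]
    simp only [_root_.map_pow]
  simp_rw [hprod]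
  rw [hf.integral_finset_prod (fun p hp => Nat.prime_of_mem_primeFactors hp)
      (fun p z => z ^ m.factorization p * conj z ^ n.factorization p) (fun p => by fun_prop),
    prod_congr rfl fun p hp =>
      hf.integral_pow_mul_conj_pow (Nat.prime_of_mem_primeFactors hp) _ _, prod_boole]
  congr 1
  refine propext ⟨fun h => Nat.eq_of_factorization_eq hm.ne' hn.ne' fun p => ?_,
    fun h _ _ => h ▸ rfl⟩
  by_cases hp : p ∈ s
  · exact h p hp
  · rw [Finsupp.notMem_support_iff.mp fun h => hp (hms h),
      Finsupp.notMem_support_iff.mp fun h => hp (hns h)]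

theorem integral_norm_sum_pow_four (hf : IsSteinhausRMF μ f) {I : Finset ℕ}
    (hI : ∀ n ∈ I, 0 < n) : ∫ ω, ‖∑ n ∈ I, f ω n‖ ^ 4 ∂μ = I.mulEnergy I := by
  have := hf.indep.isProbabilityMeasure
  have hsq : ∀ ω, ((‖∑ n ∈ I, f ω n‖ ^ 2 : ℝ) : ℂ) = ∑ a ∈ I ×ˢ I, f ω a.1 * conj (f ω a.2) := by
    intro ω
    rw [Complex.ofReal_pow, ← Complex.mul_conj' (∑ n ∈ I, f ω n), map_sum, sum_mul_sum,
      sum_product]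
  have hexpand : ∀ ω, ((‖∑ n ∈ I, f ω n‖ ^ 4 : ℝ) : ℂ)
      = ∑ x ∈ (I ×ˢ I) ×ˢ I ×ˢ I, f ω (x.1.1 * x.2.1) * conj (f ω (x.1.2 * x.2.2)) := by
    intro ω
    rw [show ‖∑ n ∈ I, f ω n‖ ^ 4 = ‖∑ n ∈ I, f ω n‖ ^ 2 * ‖∑ n ∈ I, f ω n‖ ^ 2 by ring,
      Complex.ofReal_mul, hsq, sum_mul_sum, sum_product (I ×ˢ I) (I ×ˢ I)]
    refine sum_congr rfl fun a ha => sum_congr rfl fun b hb => ?_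
    simp only [mem_product] at ha hb
    rw [hf.map_mul ω _ _ (hI _ ha.1) (hI _ hb.1), hf.map_mul ω _ _ (hI _ ha.2) (hI _ hb.2),
      _root_.map_mul]
    ring
  have hintegrable : ∀ x ∈ (I ×ˢ I) ×ˢ I ×ˢ I,
      Integrable (fun ω => f ω (x.1.1 * x.2.1) * conj (f ω (x.1.2 * x.2.2))) μ := by
    intro x hx
    simp only [mem_product] at hx
    have hmeas := (hf.meas (x.1.1 * x.2.1)).mul
      (Complex.continuous_conj.measurable.comp (hf.meas (x.1.2 * x.2.2)))
    refine Integrable.of_bound hmeas.aestronglyMeasurable 1 (ae_of_all _ fun ω => ?_)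
    rw [norm_mul, RCLike.norm_conj, hf.norm_eq_one ω (Nat.mul_pos (hI _ hx.1.1) (hI _ hx.2.1)),
      hf.norm_eq_one ω (Nat.mul_pos (hI _ hx.1.2) (hI _ hx.2.2)), one_mul]
  apply Complex.ofReal_injective
  rw [← integral_complex_ofReal, funext hexpand, integral_finsetSum _ hintegrable]
  have hterm : ∀ x ∈ (I ×ˢ I) ×ˢ I ×ˢ I, ∫ ω, f ω (x.1.1 * x.2.1) * conj (f ω (x.1.2 * x.2.2)) ∂μ
      = if x.1.1 * x.2.1 = x.1.2 * x.2.2 then 1 else 0 := by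
    intro x hx
    simp only [mem_product] at hx
    exact hf.integral_mul_conj (Nat.mul_pos (hI _ hx.1.1) (hI _ hx.2.1))
      (Nat.mul_pos (hI _ hx.1.2) (hI _ hx.2.2))
  rw [sum_congr rfl hterm, sum_boole, mulEnergy]
  norm_cast

end IsSteinhausRMF

theorem Nat.mul_card_filter_dvd_Ioc_le (U V g : ℕ) : g * #{a ∈ Ioc U V | g ∣ a} ≤ V - U + g := by
  rcases Nat.eq_zero_or_pos g with rfl | hg
  · simp
  have hsub : {a ∈ Ioc U V | g ∣ a} ⊆ (Ioc (U / g) (V / g)).image (g * ·) := by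
    intro a ha
    obtain ⟨haI, k, rfl⟩ := mem_filter.mp ha
    rw [mem_Ioc, mul_comm] at haI
    exact mem_image.mpr ⟨k, mem_Ioc.mpr ⟨(Nat.div_lt_iff_lt_mul hg).mpr haI.1,
      (Nat.le_div_iff_mul_le hg).mpr haI.2⟩, rfl⟩
  have hcard : #{a ∈ Ioc U V | g ∣ a} ≤ V / g - U / g :=
    (card_le_card hsub).trans (Finset.card_image_le.trans (Nat.card_Ioc _ _).le)
  have hV := Nat.mul_div_le V g
  have hU := Nat.lt_mul_div_succ U hg
  calc g * #{a ∈ Ioc U V | g ∣ a} ≤ g * (V / g - U / g) := Nat.mul_le_mul_left g hcard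
    _ = g * (V / g) - g * (U / g) := Nat.mul_sub g _ _
    _ ≤ V - U + g := by rw [Nat.mul_succ] at hU; omega

theorem Nat.exists_eq_mul_of_mul_eq_mul {a b c d : ℕ} (ha : a ≠ 0) (h : a * b = c * d) :
    ∃ g k r s, a = g * r ∧ c = g * s ∧ b = k * s ∧ d = k * r := by
  obtain ⟨g, r, ⟨s, rfl⟩, ⟨k, rfl⟩, rfl⟩ := exists_dvd_and_dvd_of_dvd_mul (Dvd.intro b h)
  refine ⟨g, k, r, s, rfl, rfl, Nat.eq_of_mul_eq_mul_left (Nat.pos_of_ne_zero ha) ?_, mul_comm _ _⟩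
  rw [h]
  ring

theorem Nat.le_sub_of_dvd_of_dvd_of_mem_Ioc {U V g a b : ℕ} (ha : a ∈ Ioc U V) (hb : b ∈ Ioc U V)
    (hga : g ∣ a) (hgb : g ∣ b) (hab : a ≠ b) : g ≤ V - U := by
  rw [mem_Ioc] at ha hb
  rcases Nat.lt_or_gt_of_ne hab with h | h
  · have := Nat.le_of_dvd (Nat.sub_pos_of_lt h) (Nat.dvd_sub hgb hga)
    omega
  · have := Nat.le_of_dvd (Nat.sub_pos_of_lt h) (Nat.dvd_sub hga hgb)
    omega

def smallDivisorPairs (D : ℕ) (I : Finset ℕ) : Finset (ℕ × ℕ) :=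
  {p ∈ Icc 1 D ×ˢ I | p.1 ∣ p.2}

theorem card_smallDivisorPairs_Ioc_le (U V : ℕ) :
    (#(smallDivisorPairs (V - U) (Ioc U V)) : ℝ) ≤
      2 * (V - U : ℕ) * (1 + Real.log (V - U : ℕ)) := by
  set D := V - U
  have hcard : #(smallDivisorPairs D (Ioc U V)) = ∑ g ∈ Icc 1 D, #{a ∈ Ioc U V | g ∣ a} := by
    rw [smallDivisorPairs, card_filter, sum_product]
    simp only [card_filter]
  have hterm : ∀ g ∈ Icc 1 D, (#{a ∈ Ioc U V | g ∣ a} : ℝ) ≤ 2 * D * (g : ℝ)⁻¹ := by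
    intro g hg
    rw [mem_Icc] at hg
    have hg0 : (0 : ℝ) < g := by exact_mod_cast hg.1
    have := Nat.mul_card_filter_dvd_Ioc_le U V g
    rw [← div_eq_mul_inv, le_div_iff₀ hg0, mul_comm]
    exact_mod_cast (this.trans (by omega : D + g ≤ 2 * D))
  calc (#(smallDivisorPairs D (Ioc U V)) : ℝ) ≤ ∑ g ∈ Icc 1 D, 2 * D * (g : ℝ)⁻¹ := by
        rw [hcard]; push_cast; exact sum_le_sum hterm
    _ = 2 * D * harmonic D := by rw [← mul_sum, harmonic_eq_sum_Icc]; push_cast; rfl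
    _ ≤ 2 * D * (1 + Real.log D) := by gcongr; exact harmonic_le_one_add_log D

theorem mulEnergy_Ioc_subset (U V : ℕ) :
    {x ∈ (Ioc U V ×ˢ Ioc U V) ×ˢ Ioc U V ×ˢ Ioc U V | x.1.1 * x.2.1 = x.1.2 * x.2.2} ⊆
      (Ioc U V ×ˢ Ioc U V).image (fun p => ((p.1, p.1), (p.2, p.2))) ∪
      (smallDivisorPairs (V - U) (Ioc U V) ×ˢ smallDivisorPairs (V - U) (Ioc U V)).image
        fun q => ((q.1.2, q.1.1 * (q.2.2 / q.2.1)), (q.2.2, q.2.1 * (q.1.2 / q.1.1))) := by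
  rintro ⟨⟨a₁, a₂⟩, ⟨b₁, b₂⟩⟩ hx
  simp only [mem_filter, mem_product] at hx
  obtain ⟨⟨⟨ha₁, ha₂⟩, hb₁, hb₂⟩, heq⟩ := hx
  have hpos : ∀ n ∈ Ioc U V, 0 < n := fun n hn => (Nat.zero_le U).trans_lt (mem_Ioc.mp hn).1
  rw [mem_union]
  by_cases ha : a₁ = a₂
  · subst ha
    have hb : b₁ = b₂ := Nat.eq_of_mul_eq_mul_left (hpos _ ha₁) heq
    subst hb
    exact Or.inl (mem_image.mpr ⟨(a₁, b₁), mem_product.mpr ⟨ha₁, hb₁⟩, rfl⟩)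
  obtain ⟨g, k, r, s, rfl, rfl, rfl, rfl⟩ :=
    Nat.exists_eq_mul_of_mul_eq_mul (hpos _ ha₁).ne' heq
  have hg : 0 < g := Nat.pos_of_mul_pos_right (hpos _ ha₁)
  have hk : 0 < k := Nat.pos_of_mul_pos_right (hpos _ hb₁)
  have hb : k * s ≠ k * r := fun h => ha (by rw [Nat.eq_of_mul_eq_mul_left hk h])
  have hmem : ∀ {d m n}, d * m ∈ Ioc U V → d * n ∈ Ioc U V → d * m ≠ d * n →
      (d, d * m) ∈ smallDivisorPairs (V - U) (Ioc U V) := fun hm hn hmn =>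
    mem_filter.mpr ⟨mem_product.mpr ⟨mem_Icc.mpr ⟨Nat.pos_of_mul_pos_right (hpos _ hm),
      Nat.le_sub_of_dvd_of_dvd_of_mem_Ioc hm hn (dvd_mul_right _ _) (dvd_mul_right _ _) hmn⟩, hm⟩,
      dvd_mul_right _ _⟩
  refine Or.inr (mem_image.mpr ⟨((g, g * r), (k, k * s)),
    mem_product.mpr ⟨hmem ha₁ ha₂ ha, hmem hb₁ hb₂ hb⟩, ?_⟩)
  simp only [Nat.mul_div_cancel_left _ hg, Nat.mul_div_cancel_left _ hk]

theorem mulEnergy_Ioc_le (U V : ℕ) :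
    ((Ioc U V).mulEnergy (Ioc U V) : ℝ) ≤
      ((V - U : ℕ) : ℝ) ^ 2 + (2 * (V - U : ℕ) * (1 + Real.log (V - U : ℕ))) ^ 2 := by
  have hcard : (Ioc U V).mulEnergy (Ioc U V) ≤
      (V - U) ^ 2 + #(smallDivisorPairs (V - U) (Ioc U V)) ^ 2 := by
    refine (card_le_card (mulEnergy_Ioc_subset U V)).trans
      ((card_union_le _ _).trans (add_le_add ?_ ?_))
    · exact card_image_le.trans (by rw [card_product, Nat.card_Ioc, sq])
    · exact card_image_le.trans (by rw [card_product, sq])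
  calc ((Ioc U V).mulEnergy (Ioc U V) : ℝ)
      ≤ ((V - U : ℕ) : ℝ) ^ 2 + (#(smallDivisorPairs (V - U) (Ioc U V)) : ℝ) ^ 2 := by
        exact_mod_cast hcard
    _ ≤ _ := by gcongr; exact card_smallDivisorPairs_Ioc_le U V

theorem Nat.cast_floor_sub_floor_le {α : Type*} [Field α] [LinearOrder α] [IsStrictOrderedRing α]
    [FloorSemiring α] {u v : α} (hu : 0 ≤ u) (huv : u ≤ v) :
    ((⌊v⌋₊ - ⌊u⌋₊ : ℕ) : α) ≤ v - u + 1 := by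
  rw [Nat.cast_sub (Nat.floor_mono huv)]
  linarith [Nat.floor_le (hu.trans huv), Nat.lt_floor_add_one u]

theorem sq_mul_sq_le_rpow {H v L : ℝ} (hH : 0 ≤ H) (hHv : H ≤ v) (hL : 1 ≤ L) :
    H ^ 2 * L ^ 2 ≤ v ^ ((2 : ℝ) / 3) * H ^ ((4 : ℝ) / 3) * L ^ ((52 : ℝ) / 3) := by
  have hsplit : H ^ 2 = H ^ ((4 : ℝ) / 3) * H ^ ((2 : ℝ) / 3) := by
    rw [← Real.rpow_add' hH (by norm_num)]
    norm_num
  have hL2 : L ^ 2 ≤ L ^ ((52 : ℝ) / 3) := by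
    rw [← Real.rpow_natCast]
    exact Real.rpow_le_rpow_of_exponent_le hL (by norm_num)
  have hv : 0 ≤ v := hH.trans hHv
  rw [hsplit, mul_comm (H ^ _)]
  exact mul_le_mul (mul_le_mul_of_nonneg_right (Real.rpow_le_rpow hH hHv (by norm_num))
    (by positivity)) hL2 (by positivity) (by positivity)

theorem steinhaus_fourth_moment_short_interval_general {Ω : Type*} [MeasurableSpace Ω]
    (μ : Measure Ω) (f : Ω → ℕ → ℂ)
    (hf : IsSteinhausRMF μ f) :
    ∃ C : ℝ, 0 < C ∧ ∀ u v : ℝ, 3 ≤ u → u ≤ v → v ≤ 2 * u → 1 ≤ v - u →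
      ∫ ω, ‖∑ n ∈ Finset.Ioc ⌊u⌋₊ ⌊v⌋₊, f ω n‖ ^ 4 ∂μ ≤
        C * v ^ ((2 : ℝ) / 3) * (v - u) ^ ((4 : ℝ) / 3) *
          Real.log v ^ ((52 : ℝ) / 3) := by
  refine ⟨68, by norm_num, fun u v hu huv _ hvu => ?_⟩
  set D := ⌊v⌋₊ - ⌊u⌋₊
  have hD : (D : ℝ) ≤ 2 * (v - u) := by
    linarith [Nat.cast_floor_sub_floor_le (by linarith : (0 : ℝ) ≤ u) huv]
  have hlogv : 1 ≤ Real.log v := by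
    rw [Real.le_log_iff_exp_le (by linarith)]
    linarith [Real.exp_one_lt_d9]
  have hlogD : Real.log D ≤ Real.log v := by
    rcases Nat.eq_zero_or_pos D with hD0 | hD0
    · rw [hD0, Nat.cast_zero, Real.log_zero]; linarith
    · exact Real.log_le_log (by exact_mod_cast hD0) (by linarith)
  rw [hf.integral_norm_sum_pow_four fun n hn => (Nat.zero_le _).trans_lt (mem_Ioc.mp hn).1]
  calc _ ≤ (D : ℝ) ^ 2 + (2 * D * (1 + Real.log D)) ^ 2 := mulEnergy_Ioc_le _ _
    _ ≤ (2 * (v - u)) ^ 2 + (2 * (2 * (v - u)) * (2 * Real.log v)) ^ 2 := by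
        gcongr; linarith
    _ ≤ 68 * ((v - u) ^ 2 * Real.log v ^ 2) := by
        nlinarith [mul_le_mul_of_nonneg_left (one_le_pow₀ hlogv : 1 ≤ Real.log v ^ 2)
          (sq_nonneg (v - u))]
    _ ≤ 68 * (v ^ ((2 : ℝ) / 3) * (v - u) ^ ((4 : ℝ) / 3) * Real.log v ^ ((52 : ℝ) / 3)) := by
        refine mul_le_mul_of_nonneg_left (sq_mul_sq_le_rpow ?_ ?_ hlogv) (by norm_num) <;> linarith
    _ = _ := by ring

/-- Fourth moment bound in short intervals: there is an absolute constant `C > 0` such that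
for `3 ≤ u ≤ v ≤ 2u` with `v - u ≥ 1`,
`E|∑_{u < n ≤ v} f(n)|⁴ ≤ C v^{2/3} (v-u)^{4/3} (log v)^{52/3}`. -/
theorem steinhaus_fourth_moment_short_interval {Ω : Type*} [MeasurableSpace Ω]
    (μ : Measure Ω) [IsProbabilityMeasure μ] (f : Ω → ℕ → ℂ)
    (hf : IsSteinhausRMF μ f) :
    ∃ C : ℝ, 0 < C ∧ ∀ u v : ℝ, 3 ≤ u → u ≤ v → v ≤ 2 * u → 1 ≤ v - u →
      ∫ ω, ‖∑ n ∈ Finset.Ioc ⌊u⌋₊ ⌊v⌋₊, f ω n‖ ^ 4 ∂μ ≤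
        C * v ^ ((2 : ℝ) / 3) * (v - u) ^ ((4 : ℝ) / 3) *
          Real.log v ^ ((52 : ℝ) / 3) :=
  steinhaus_fourth_moment_short_interval_general μ f hf
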